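/- arXiv:1408.2193 — 10 statements merged into one kernel-verified Lean document; each statement's English description precedes it below -/
import Mathlib

section
/- For every 1 ≤ k ≤ n and every real z, the matrix S_{[n,k]}(z) is invertible and S_{[n,k]}(z)^{−1} = L · S_{[n,k]}(−z)^T · L^{−1}. -/
open Matrix

/- Each factor is `S(z) = 1 - z m • v wᵀ` with `wᵀ v = 0`, so `S(z)⁻¹ = 1 + z m • v wᵀ`.
Since `L w = v` and `wᵀ L = vᵀ`, the map `A ↦ L Aᵀ L⁻¹` fixes `v wᵀ`, so it sends `S(-z)` to `S(z)⁻¹`.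
This map reverses products, hence the identity passes from the factors to `S_{[n,k]}`. -/

/-- The 3×3 matrix `S(x,m;z) = I − z·m·v(x)·w(x)ᵀ` with
`v(x) = (e^{−x}, −2, e^{x})ᵀ` and `w(x) = (e^{x}, 1, e^{−x})ᵀ`. -/
noncomputable def Speak (x m z : ℝ) : Matrix (Fin 3) (Fin 3) ℝ :=
  1 - (z * m) • vecMulVec ![Real.exp (-x), -2, Real.exp x] ![Real.exp x, 1, Real.exp (-x)]

/-- `S_{[n,k]}(z) = S_n(z) · S_{n−1}(z) ⋯ S_{n−k+1}(z)`, where `S_j(z) = S(x_j, m_j; z)`. -/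
noncomputable def Sblock (x m : ℕ → ℝ) (n k : ℕ) (z : ℝ) : Matrix (Fin 3) (Fin 3) ℝ :=
  ((List.range k).map (fun i => Speak (x (n - i)) (m (n - i)) z)).prod

/-- The vector `(A_j(z), B_j(z), C_j(z))ᵀ = S_j(z) · S_{j−1}(z) ⋯ S_1(z) · (1,0,0)ᵀ`. -/
noncomputable def ABCvec (x m : ℕ → ℝ) (j : ℕ) (z : ℝ) : Fin 3 → ℝ :=
  (((List.range j).map (fun i => Speak (x (j - i)) (m (j - i)) z)).prod).mulVec ![1, 0, 0]

/-- The matrix `L` with rows `(0,0,1)`, `(0,−2,0)`, `(1,0,0)`. -/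
noncomputable def Lmat : Matrix (Fin 3) (Fin 3) ℝ := !![0, 0, 1; 0, -2, 0; 1, 0, 0]

namespace Matrix

variable {ι α : Type*} [Fintype ι] [DecidableEq ι] [CommRing α]

theorem one_sub_smul_vecMulVec_mul_one_add_smul {v w : ι → α} (h : w ⬝ᵥ v = 0) (c : α) :
    (1 - c • vecMulVec v w) * (1 + c • vecMulVec v w) = 1 := by
  simp only [sub_mul, mul_add, one_mul, mul_one, smul_mul_smul, vecMulVec_mul_vecMulVec, h,
    zero_smul, vecMulVec_zero, smul_zero, sub_zero, sub_add_cancel]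

theorem mul_transpose_mul_mul_inv {L : Matrix ι ι α} (hL : IsUnit L.det) (A B : Matrix ι ι α) :
    L * (A * B)ᵀ * L⁻¹ = L * Bᵀ * L⁻¹ * (L * Aᵀ * L⁻¹) := by
  simp only [transpose_mul, Matrix.mul_assoc, nonsing_inv_mul_cancel_left _ _ hL]

theorem mul_transpose_vecMulVec_mul_inv {L : Matrix ι ι α} (hL : IsUnit L.det) {v w : ι → α}
    (hLw : L *ᵥ w = v) (hwL : w ᵥ* L = v) :
    L * (vecMulVec v w)ᵀ * L⁻¹ = vecMulVec v w := by
  have hvL : v ᵥ* L⁻¹ = w := by rw [← hwL, vecMul_vecMul, mul_nonsing_inv _ hL, vecMul_one]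
  rw [transpose_vecMulVec, mul_vecMulVec, vecMulVec_mul, hLw, hvL]

end Matrix

theorem isUnit_det_Lmat : IsUnit Lmat.det := by
  simp [Lmat, det_fin_three]

theorem Lmat_mulVec (x : ℝ) :
    Lmat *ᵥ ![Real.exp x, 1, Real.exp (-x)] = ![Real.exp (-x), -2, Real.exp x] := by
  ext i; fin_cases i <;> simp [Lmat, mulVec, dotProduct, Fin.sum_univ_three]

theorem vecMul_Lmat (x : ℝ) :
    ![Real.exp x, 1, Real.exp (-x)] ᵥ* Lmat = ![Real.exp (-x), -2, Real.exp x] := by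
  ext i; fin_cases i <;> simp [Lmat, vecMul, dotProduct, Fin.sum_univ_three]

theorem exp_vec_dotProduct_eq_zero (x : ℝ) :
    ![Real.exp x, 1, Real.exp (-x)] ⬝ᵥ ![Real.exp (-x), -2, Real.exp x] = 0 := by
  simp [dotProduct, Fin.sum_univ_three, Real.exp_neg, Real.exp_ne_zero]
  norm_num

theorem Speak_mul_Lmat_transpose_neg (x m z : ℝ) :
    Speak x m z * (Lmat * (Speak x m (-z))ᵀ * Lmat⁻¹) = 1 := by
  have hfix := mul_transpose_vecMulVec_mul_inv isUnit_det_Lmat (Lmat_mulVec x) (vecMul_Lmat x)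
  have hconj : Lmat * (Speak x m (-z))ᵀ * Lmat⁻¹ =
      1 + (z * m) • vecMulVec ![Real.exp (-x), -2, Real.exp x] ![Real.exp x, 1, Real.exp (-x)] := by
    rw [Speak, transpose_sub, transpose_one, transpose_smul, mul_sub, sub_mul, mul_one,
      mul_nonsing_inv _ isUnit_det_Lmat, Matrix.mul_smul, Matrix.smul_mul, hfix, neg_mul, neg_smul,
      sub_neg_eq_add]
  rw [hconj, Speak]
  exact one_sub_smul_vecMulVec_mul_one_add_smul (exp_vec_dotProduct_eq_zero x) _

theorem Sblock_succ (x m : ℕ → ℝ) (n k : ℕ) (z : ℝ) :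
    Sblock x m n (k + 1) z = Sblock x m n k z * Speak (x (n - k)) (m (n - k)) z := by
  simp [Sblock, List.range_succ]

theorem Sblock_mul_Lmat_transpose_neg (x m : ℕ → ℝ) (n k : ℕ) (z : ℝ) :
    Sblock x m n k z * (Lmat * (Sblock x m n k (-z))ᵀ * Lmat⁻¹) = 1 := by
  induction k with
  | zero => simp [Sblock, mul_nonsing_inv _ isUnit_det_Lmat]
  | succ k ih =>
    rw [Sblock_succ, Sblock_succ, mul_transpose_mul_mul_inv isUnit_det_Lmat, Matrix.mul_assoc,
      ← Matrix.mul_assoc (Speak _ _ z), Speak_mul_Lmat_transpose_neg, Matrix.one_mul, ih]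

theorem sblock_inverse_general (n : ℕ) (x m : ℕ → ℝ) (k : ℕ) (z : ℝ) :
    IsUnit (Sblock x m n k z) ∧
    (Sblock x m n k z)⁻¹ = Lmat * (Sblock x m n k (-z))ᵀ * Lmat⁻¹ := by
  have h := Sblock_mul_Lmat_transpose_neg x m n k z
  exact ⟨IsUnit.of_mul_eq_one _ h, inv_eq_right_inv h⟩

theorem sblock_inverse (n : ℕ) (hn : 1 ≤ n) (x m : ℕ → ℝ) (k : ℕ)
    (hk1 : 1 ≤ k) (hkn : k ≤ n) (z : ℝ) :
    IsUnit (Sblock x m n k z) ∧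
    (Sblock x m n k z)⁻¹ = Lmat * (Sblock x m n k (-z))ᵀ * Lmat⁻¹ :=
  sblock_inverse_general n x m k z
end

section
/- For every 1 ≤ k ≤ n and every real z, the exact identity C_n(z)·s_{11}(−z) − (1/2)·B_n(z)·s_{21}(−z) + A_n(z)·s_{31}(−z) = C_{n−k}(z) holds, where s_{ij}(z) are the entries of S_{[n,k]}(z). -/
open Matrix

noncomputable def Jm : Matrix (Fin 3) (Fin 3) ℝ := !![0,0,1;0,-(1/2),0;1,0,0]

lemma speak_conj (x m z : ℝ) : (Speak x m (-z))ᵀ * Jm * Speak x m z = Jm := by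
  have hx : Real.exp (-x) = (Real.exp x)⁻¹ := Real.exp_neg x
  have hne : Real.exp x ≠ 0 := Real.exp_ne_zero x
  ext i j
  fin_cases i <;> fin_cases j <;>
    simp [Speak, Jm, Matrix.mul_apply, Fin.sum_univ_three, vecMulVec_apply,
      Matrix.one_apply, Matrix.vecHead, Matrix.vecTail, hx] <;>
    field_simp <;> ring

lemma sblock_conj (x m : ℕ → ℝ) (n : ℕ) (z : ℝ) (k : ℕ) :
    (Sblock x m n k (-z))ᵀ * Jm * Sblock x m n k z = Jm := by
  induction k with
  | zero => simp [Sblock]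
  | succ k ih =>
    have h1 : Sblock x m n (k+1) z
        = Sblock x m n k z * Speak (x (n-k)) (m (n-k)) z := by
      simp [Sblock, List.range_succ]
    have h2 : Sblock x m n (k+1) (-z)
        = Sblock x m n k (-z) * Speak (x (n-k)) (m (n-k)) (-z) := by
      simp [Sblock, List.range_succ]
    rw [h1, h2, Matrix.transpose_mul]
    have : (Speak (x (n-k)) (m (n-k)) (-z))ᵀ * (Sblock x m n k (-z))ᵀ * Jm
        * (Sblock x m n k z * Speak (x (n-k)) (m (n-k)) z)
        = (Speak (x (n-k)) (m (n-k)) (-z))ᵀ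
          * ((Sblock x m n k (-z))ᵀ * Jm * Sblock x m n k z)
          * Speak (x (n-k)) (m (n-k)) z := by
      noncomm_ring
    rw [this, ih, speak_conj]

lemma abc_split (x m : ℕ → ℝ) (n k : ℕ) (hkn : k ≤ n) (z : ℝ) :
    ABCvec x m n z = (Sblock x m n k z).mulVec (ABCvec x m (n-k) z) := by
  unfold ABCvec Sblock
  rw [Matrix.mulVec_mulVec]
  congr 1
  rw [← List.prod_append]
  congr 1
  rw [show List.range n = List.range k ++ (List.range (n - k)).map (k + ·) from by
    rw [← List.range_add, Nat.add_sub_cancel' hkn]]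
  rw [List.map_append, List.map_map]
  have : (fun i => Speak (x (n - i)) (m (n - i)) z) ∘ (fun j => k + j)
      = fun i => Speak (x (n - k - i)) (m (n - k - i)) z := by
    funext i
    simp [Nat.sub_sub]
  rw [this]

theorem abc_exact_identity (n : ℕ) (hn : 1 ≤ n) (x m : ℕ → ℝ) (k : ℕ)
    (hk1 : 1 ≤ k) (hkn : k ≤ n) (z : ℝ) :
    ABCvec x m n z 2 * Sblock x m n k (-z) 0 0
      - (1 / 2) * ABCvec x m n z 1 * Sblock x m n k (-z) 1 0
      + ABCvec x m n z 0 * Sblock x m n k (-z) 2 0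
    = ABCvec x m (n - k) z 2 := by
  have hP := sblock_conj x m n z k
  have h00 := congrFun (congrFun hP 0) 0
  have h01 := congrFun (congrFun hP 0) 1
  have h02 := congrFun (congrFun hP 0) 2
  simp [Matrix.mul_apply, Jm, Fin.sum_univ_three, Matrix.transpose_apply] at h00 h01 h02
  rw [abc_split x m n k hkn z]
  simp only [Matrix.mulVec, dotProduct, Fin.sum_univ_three]
  set v := ABCvec x m (n-k) z
  linear_combination v 0 * h00 + v 1 * h01 + v 2 * h02
end

section
/- For every 1 ≤ k ≤ n, the (1,1) entry s_{11}(z) of S_{[n,k]}(z) is a polynomial in z whose coefficient of z^k equals (−1)^k · (∏_{j=n−k+1}^{n} m_j) · e^{x_{n−k+1} − x_n} · ∏_{j=n−k+1}^{n−1} (e^{x_{j+1}−x_j} − 2 + e^{x_j−x_{j+1}}) (the last product being empty, hence 1, when k = 1). In particular, if m_j ≠ 0 for all j and x_1 < x_2 < ⋯ < x_n, then s_{11} has degree exactly k. -/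
open Matrix

/-! ### Auxiliary definitions and lemmas -/

noncomputable def vvv (x : ℝ) : Fin 3 → ℝ := ![Real.exp (-x), -2, Real.exp x]
noncomputable def www (x : ℝ) : Fin 3 → ℝ := ![Real.exp x, 1, Real.exp (-x)]
noncomputable def Bmat (x m : ℝ) : Matrix (Fin 3) (Fin 3) ℝ := -(m • vecMulVec (vvv x) (www x))
noncomputable def Echain (x : ℕ → ℝ) (j : ℕ) : ℝ :=
  Real.exp (x (j + 1) - x j) - 2 + Real.exp (x j - x (j + 1))

/-- The polynomial-entried version of `Speak`. -/
noncomputable def MS (x m : ℝ) : Matrix (Fin 3) (Fin 3) (Polynomial ℝ) :=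
  Matrix.of fun i j => Polynomial.C ((1 : Matrix (Fin 3) (Fin 3) ℝ) i j) +
    Polynomial.C (Bmat x m i j) * Polynomial.X

lemma MS_eval (x m z : ℝ) : (MS x m).map (Polynomial.eval z) = Speak x m z := by
  ext i j
  simp [MS, Speak, Bmat, Matrix.map_apply, Matrix.sub_apply, Matrix.one_apply, vecMulVec_apply,
    Matrix.smul_apply, Matrix.neg_apply, vvv, www, apply_ite (Polynomial.eval z)]
  ring

lemma matPolyEquiv_MS (x m : ℝ) :
    matPolyEquiv (MS x m) = Polynomial.C 1 + Polynomial.C (Bmat x m) * Polynomial.X := by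
  apply Polynomial.ext; intro nn
  ext i j
  rw [matPolyEquiv_coeff_apply]
  match nn with
  | 0 => simp [MS, Matrix.add_apply, Polynomial.coeff_one]
  | 1 => simp [MS, Matrix.add_apply, Polynomial.coeff_one]
  | (n+2) => simp [MS, Polynomial.coeff_C, Matrix.add_apply, Polynomial.coeff_one]

lemma key {R : Type*} [Ring R] (l : List R) :
    ((l.map fun B => (Polynomial.C 1 + Polynomial.C B * Polynomial.X)).prod.natDegree ≤ l.length) ∧
    ((l.map fun B => (Polynomial.C 1 + Polynomial.C B * Polynomial.X)).prod.coeff l.length = l.prod) := by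
  induction l with
  | nil => simp
  | cons B l ih =>
    obtain ⟨h1, h2⟩ := ih
    simp only [List.map_cons, List.prod_cons, List.length_cons]
    constructor
    · refine le_trans Polynomial.natDegree_mul_le ?_
      have : (Polynomial.C 1 + Polynomial.C B * Polynomial.X : Polynomial R).natDegree ≤ 1 := by
        refine le_trans (Polynomial.natDegree_add_le _ _) ?_
        simp only [Polynomial.natDegree_C, max_le_iff]
        refine ⟨by omega, le_trans Polynomial.natDegree_mul_le ?_⟩
        simp [Polynomial.natDegree_X_le]
      omega
    · rw [add_mul, Polynomial.coeff_add, mul_assoc, Polynomial.coeff_C_mul, Polynomial.coeff_C_mul,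
        Polynomial.coeff_X_mul, h2]
      have : ((l.map fun B => (Polynomial.C 1 + Polynomial.C B * Polynomial.X)).prod).coeff
          (l.length + 1) = 0 :=
        Polynomial.coeff_eq_zero_of_natDegree_lt (by omega)
      rw [this]; simp

lemma vmv_mul (v w v' w' : Fin 3 → ℝ) :
    vecMulVec v w * vecMulVec v' w' = (w ⬝ᵥ v') • vecMulVec v w' := by
  ext i j
  simp [Matrix.mul_apply, vecMulVec_apply, dotProduct, Fin.sum_univ_three]
  ring

lemma dot_wv (a b : ℝ) : www a ⬝ᵥ vvv b = Real.exp (a - b) - 2 + Real.exp (b - a) := by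
  simp [www, vvv, dotProduct, Fin.sum_univ_three, ← Real.exp_add]
  ring_nf

lemma prod_Icc_bot (a b : ℕ) (h : a ≤ b) (f : ℕ → ℝ) :
    ∏ j ∈ Finset.Icc a b, f j = f a * ∏ j ∈ Finset.Icc (a+1) b, f j := by
  have : Finset.Icc a b = insert a (Finset.Icc (a+1) b) := by
    ext j; simp [Finset.mem_Icc, Finset.mem_insert]; omega
  rw [this, Finset.prod_insert (by simp [Finset.mem_Icc])]

lemma Bprod_eq (x m : ℕ → ℝ) (n : ℕ) (k : ℕ) (hk1 : 1 ≤ k) (hkn : k ≤ n) :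
    ((List.range k).map fun i => Bmat (x (n - i)) (m (n - i))).prod =
      ((-1)^k * (∏ j ∈ Finset.Icc (n - k + 1) n, m j) *
        ∏ j ∈ Finset.Icc (n - k + 1) (n - 1), Echain x j) •
        vecMulVec (vvv (x n)) (www (x (n - k + 1))) := by
  induction k with
  | zero => omega
  | succ k ih =>
    rcases Nat.eq_zero_or_pos k with rfl | hk
    · have h1 : n - 0 = n := by omega
      have h2 : n - 1 + 1 = n := by omega
      have h3 : Finset.Icc n (n - 1) = (∅ : Finset ℕ) := by
        apply Finset.Icc_eq_empty; omega
      simp only [show List.range 1 = [0] from rfl, List.map_cons, List.map_nil, List.prod_cons,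
        List.prod_nil, mul_one, h1, h2, h3, Finset.prod_empty, Finset.Icc_self,
        Finset.prod_singleton]
      rw [show Bmat (x n) (m n) = -(m n • vecMulVec (vvv (x n)) (www (x n))) from rfl]
      match_scalars
      ring
    · have hkn' : k ≤ n := by omega
      have ihk := ih hk hkn'
      rw [List.range_succ, List.map_append, List.prod_append, List.map_cons, List.map_nil,
        List.prod_cons, List.prod_nil, mul_one, ihk]
      rw [Bmat, smul_mul_assoc, mul_neg, mul_smul_comm, vmv_mul, dot_wv]
      have hnk : n - (k+1) + 1 = n - k := by omega
      have hd : Real.exp (x (n - k + 1) - x (n - k)) - 2 + Real.exp (x (n - k) - x (n - k + 1)) =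
          Echain x (n - k) := by rw [Echain]
      rw [hd, hnk]
      have hM : (∏ j ∈ Finset.Icc (n - k) n, m j) =
          m (n - k) * ∏ j ∈ Finset.Icc (n - k + 1) n, m j :=
        prod_Icc_bot _ _ (by omega) _
      have hD : (∏ j ∈ Finset.Icc (n - k) (n - 1), Echain x j) =
          Echain x (n - k) * ∏ j ∈ Finset.Icc (n - k + 1) (n - 1), Echain x j :=
        prod_Icc_bot _ _ (by omega) _
      rw [hM, hD]
      match_scalars
      ring

lemma Echain_pos (a b : ℝ) (h : a < b) :
    0 < Real.exp (b - a) - 2 + Real.exp (a - b) := by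
  have h1 : Real.exp ((b-a)/2) * Real.exp ((b-a)/2) = Real.exp (b-a) := by
    rw [← Real.exp_add]; congr 1; ring
  have h2 : Real.exp ((a-b)/2) * Real.exp ((a-b)/2) = Real.exp (a-b) := by
    rw [← Real.exp_add]; congr 1; ring
  have h3 : Real.exp ((b-a)/2) * Real.exp ((a-b)/2) = 1 := by
    rw [← Real.exp_add, show (b-a)/2 + (a-b)/2 = 0 by ring, Real.exp_zero]
  have hkey : Real.exp (b-a) - 2 + Real.exp (a-b) =
      (Real.exp ((b-a)/2) - Real.exp ((a-b)/2))^2 := by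
    linear_combination -h1 - h2 + 2*h3
  rw [hkey]
  have hlt : Real.exp ((a-b)/2) < Real.exp ((b-a)/2) := Real.exp_lt_exp.mpr (by linarith)
  exact pow_pos (sub_pos.mpr hlt) 2

theorem sblock_leading_coeff (n : ℕ) (hn : 1 ≤ n) (x m : ℕ → ℝ) (k : ℕ)
    (hk1 : 1 ≤ k) (hkn : k ≤ n) :
    ∃ p : Polynomial ℝ,
      (∀ z : ℝ, Sblock x m n k z 0 0 = p.eval z) ∧
      p.coeff k = (-1) ^ k * (∏ j ∈ Finset.Icc (n - k + 1) n, m j) *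
        Real.exp (x (n - k + 1) - x n) *
        ∏ j ∈ Finset.Icc (n - k + 1) (n - 1),
          (Real.exp (x (j + 1) - x j) - 2 + Real.exp (x j - x (j + 1))) ∧
      ((∀ j, 1 ≤ j → j ≤ n → m j ≠ 0) →
        (∀ j, 1 ≤ j → j < n → x j < x (j + 1)) →
        p.degree = (k : ℕ)) := by
  set P : Matrix (Fin 3) (Fin 3) (Polynomial ℝ) :=
    ((List.range k).map (fun i => MS (x (n - i)) (m (n - i)))).prod with hP
  set lB : List (Matrix (Fin 3) (Fin 3) ℝ) :=
    (List.range k).map (fun i => Bmat (x (n - i)) (m (n - i))) with hlB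
  have hlen : lB.length = k := by simp [hlB]
  have hmp : matPolyEquiv P =
      (lB.map fun B => Polynomial.C 1 + Polynomial.C B * Polynomial.X).prod := by
    rw [hP, map_list_prod matPolyEquiv, hlB, List.map_map, List.map_map]
    congr 1
    apply List.map_congr_left
    intro i _
    exact matPolyEquiv_MS _ _
  have hco : ∀ r : ℕ, (P 0 0).coeff r = (matPolyEquiv P).coeff r 0 0 :=
    fun r => (matPolyEquiv_coeff_apply P r 0 0).symm
  -- coefficient k
  have hEprod : ∀ j ∈ Finset.Icc (n - k + 1) (n - 1),
      Echain x j = Real.exp (x (j + 1) - x j) - 2 + Real.exp (x j - x (j + 1)) :=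
    fun j _ => rfl
  have hcoeffk : (P 0 0).coeff k =
      (-1) ^ k * (∏ j ∈ Finset.Icc (n - k + 1) n, m j) *
        Real.exp (x (n - k + 1) - x n) *
        ∏ j ∈ Finset.Icc (n - k + 1) (n - 1),
          (Real.exp (x (j + 1) - x j) - 2 + Real.exp (x j - x (j + 1))) := by
    rw [hco, hmp, ← hlen, (key lB).2, hlen, hlB, Bprod_eq x m n k hk1 hkn]
    rw [Matrix.smul_apply, vecMulVec_apply]
    rw [show vvv (x n) 0 = Real.exp (-(x n)) from rfl,
      show www (x (n - k + 1)) 0 = Real.exp (x (n - k + 1)) from rfl]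
    rw [← Finset.prod_congr rfl hEprod]
    rw [show x (n - k + 1) - x n = x (n - k + 1) + -(x n) by ring, Real.exp_add]
    simp only [smul_eq_mul]
    ring
  refine ⟨P 0 0, ?_, hcoeffk, ?_⟩
  · intro z
    have hmap : P.map (Polynomial.eval z) = Sblock x m n k z := by
      have := map_list_prod ((Polynomial.evalRingHom z).mapMatrix)
        ((List.range k).map (fun i => MS (x (n - i)) (m (n - i))))
      rw [hP, Sblock]
      rw [show (Polynomial.eval z) = ⇑(Polynomial.evalRingHom z) from rfl]
      rw [← RingHom.mapMatrix_apply, this, List.map_map]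
      congr 1
      apply List.map_congr_left
      intro i _
      rw [Function.comp_apply, RingHom.mapMatrix_apply]
      exact MS_eval _ _ _
    rw [← hmap, Matrix.map_apply]
  · intro hm hx
    have hdegle : (P 0 0).degree ≤ (k : ℕ) := by
      rw [Polynomial.degree_le_iff_coeff_zero]
      intro r hr
      have hr' : k < r := by exact_mod_cast hr
      rw [hco, hmp]
      have hnd := (key lB).1
      rw [hlen] at hnd
      rw [Polynomial.coeff_eq_zero_of_natDegree_lt (lt_of_le_of_lt hnd hr')]
      simp
    refine Polynomial.degree_eq_of_le_of_coeff_ne_zero hdegle ?_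
    rw [hcoeffk]
    refine mul_ne_zero (mul_ne_zero (mul_ne_zero ?_ ?_) (Real.exp_ne_zero _)) ?_
    · exact pow_ne_zero _ (by norm_num)
    · rw [Finset.prod_ne_zero_iff]
      intro j hj
      rw [Finset.mem_Icc] at hj
      exact hm j (by omega) hj.2
    · rw [Finset.prod_ne_zero_iff]
      intro j hj
      rw [Finset.mem_Icc] at hj
      have hxj : x j < x (j + 1) := hx j (by omega) (by omega)
      exact ne_of_gt (Echain_pos _ _ hxj)
end

section
/- Assume the pure peakon assumption. Then for every 1 ≤ k ≤ n, the function z ↦ B_n(z)/A_n(z) − s_{21}(z)/s_{11}(z) is O(1/z^k) as z → +∞ (big-O with respect to the filter at +∞ on the reals). -/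
/-! Lift every `S_j` to a polynomial matrix in `z` and split
`S_{[n,n]} = S_{[n,k]} · S_{[n-k,n-k]}`. The numerator `B_n s₁₁ - A_n s₂₁` of the difference is
then a combination of `2 × 2` minors of `S_{[n,k]}`, i.e. of entries of its adjugate, with entries
of `S_{[n-k,n-k]}`. Since `w(x) ⬝ v(x) = 0`, the adjugate of `S(x,m;z)` is `S(x,-m;z)`, so these
minors have degree at most `k` and the numerator has degree at most `n`. The top coefficient of a
product of `k` factors is the product of the rank-one matrices `-m_j v(x_j) w(x_j)ᵀ`, whose `(1,1)`
entry is a nonzero multiple of `∏ (cosh (x_{j+1} - x_j) - 1)` under the pure peakon assumption.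
Hence `A_n` and `s₁₁` have degrees exactly `n` and `k`, and the difference decays like
`z ^ (n - (n + k))`. -/

open Matrix

open Polynomial Filter Asymptotics

namespace Matrix

section Degree

variable {l ι o R : Type*} [Fintype ι] [Semiring R]

theorem natDegree_mul_apply_le {M : Matrix l ι R[X]} {N : Matrix ι o R[X]} {a b : ℕ}
    (hM : ∀ i j, (M i j).natDegree ≤ a) (hN : ∀ i j, (N i j).natDegree ≤ b) (i : l) (j : o) :
    ((M * N) i j).natDegree ≤ a + b :=
  natDegree_sum_le_of_forall_le _ _ fun r _ =>
    natDegree_mul_le.trans (add_le_add (hM i r) (hN r j))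

theorem coeff_mul_apply_add {M : Matrix l ι R[X]} {N : Matrix ι o R[X]} {a b : ℕ}
    (hM : ∀ i j, (M i j).natDegree ≤ a) (hN : ∀ i j, (N i j).natDegree ≤ b) (i : l) (j : o) :
    ((M * N) i j).coeff (a + b) = ∑ r, (M i r).coeff a * (N r j).coeff b := by
  rw [mul_apply, finsetSum_coeff]
  exact Finset.sum_congr rfl fun r _ => coeff_mul_add_eq_of_natDegree_le (hM i r) (hN r j)

variable [DecidableEq ι]

theorem natDegree_list_prod_apply_le (L : List (Matrix ι ι R[X]))
    (hL : ∀ M ∈ L, ∀ i j, (M i j).natDegree ≤ 1) (i j : ι) :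
    (L.prod i j).natDegree ≤ L.length := by
  induction L generalizing i j with
  | nil =>
    rw [List.prod_nil, one_apply]
    split_ifs <;> simp
  | cons M L ih =>
    rw [List.prod_cons, List.length_cons, add_comm]
    exact natDegree_mul_apply_le (hL M List.mem_cons_self)
      (ih fun N hN => hL N (List.mem_cons_of_mem M hN)) i j

theorem coeff_list_prod_apply_length (L : List (Matrix ι ι R[X]))
    (hL : ∀ M ∈ L, ∀ i j, (M i j).natDegree ≤ 1) (i j : ι) :
    (L.prod i j).coeff L.length = (L.map fun M => M.map (coeff · 1)).prod i j := by
  induction L generalizing i j with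
  | nil =>
    simp only [List.prod_nil, List.map_nil, List.length_nil, one_apply]
    split_ifs <;> simp
  | cons M L ih =>
    have hM := hL M List.mem_cons_self
    have hL' := fun N hN => hL N (List.mem_cons_of_mem M hN)
    rw [List.prod_cons, List.length_cons, add_comm, coeff_mul_apply_add hM
      (natDegree_list_prod_apply_le L hL'), List.map_cons, List.prod_cons, mul_apply]
    simp only [ih hL', map_apply]

end Degree

theorem adjugate_list_prod {ι R : Type*} [Fintype ι] [DecidableEq ι] [CommRing R]
    (L : List (Matrix ι ι R)) : L.prod.adjugate = (L.map adjugate).reverse.prod := by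
  induction L with
  | nil => simp
  | cons M L ih => simp [adjugate_mul_distrib, ih]

variable {ι R : Type*} [Fintype ι] [DecidableEq ι] [CommRing R]

theorem det_one_add_vecMulVec (u v : ι → R) : (1 + vecMulVec u v).det = 1 + v ⬝ᵥ u := by
  rw [vecMulVec_eq Unit, det_one_add_replicateCol_mul_replicateRow]

theorem adjugate_one_add_vecMulVec_of_dotProduct_eq_zero {u v : ι → R} (h : v ⬝ᵥ u = 0) :
    (1 + vecMulVec u v).adjugate = 1 - vecMulVec u v := by
  have hinv : (1 - vecMulVec u v) * (1 + vecMulVec u v) = 1 := by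
    rw [sub_mul, mul_add, mul_add, vecMulVec_mul_vecMulVec, h, zero_smul, vecMulVec_zero,
      Matrix.one_mul, Matrix.mul_one, Matrix.one_mul]
    abel
  calc (1 + vecMulVec u v).adjugate
      = (1 - vecMulVec u v) * (1 + vecMulVec u v) * (1 + vecMulVec u v).adjugate := by
        rw [hinv, Matrix.one_mul]
    _ = 1 - vecMulVec u v := by
        rw [Matrix.mul_assoc, mul_adjugate, det_one_add_vecMulVec, h, add_zero, one_smul,
          Matrix.mul_one]

theorem list_prod_vecMulVec (a b : ℕ → ι → R) (k : ℕ) :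
    ((List.range (k + 1)).map fun i => vecMulVec (a i) (b i)).prod
      = (∏ i ∈ Finset.range k, b i ⬝ᵥ a (i + 1)) • vecMulVec (a 0) (b k) := by
  induction k with
  | zero => simp
  | succ k ih =>
    rw [List.range_succ, List.map_append, List.prod_append, ih, List.map_singleton,
      List.prod_singleton, smul_mul, vecMulVec_mul_vecMulVec, Finset.prod_range_succ, mul_smul,
      vecMulVec_smul]

theorem mul_apply_mul_sub_eq_adjugate_fin_three (M N : Matrix (Fin 3) (Fin 3) R) :
    (M * N) 1 0 * M 0 0 - (M * N) 0 0 * M 1 0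
      = M.adjugate 2 2 * N 1 0 - M.adjugate 1 2 * N 2 0 := by
  simp only [Fin.isValue, mul_apply, Fin.sum_univ_three, adjugate_fin_three, of_apply, cons_val',
    cons_val, cons_val_fin_one, cons_val_one, cons_val_zero]
  ring

end Matrix

section RankOnePencil

variable {ι R : Type*} [DecidableEq ι] [CommRing R]

noncomputable def rankOnePencil (a b : ι → R) : Matrix ι ι R[X] :=
  1 + vecMulVec (fun i => C (a i) * X) (fun j => C (b j))

theorem rankOnePencil_map_eval (a b : ι → R) (z : R) :
    (rankOnePencil a b).map (eval z) = 1 + z • vecMulVec a b := by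
  ext i j
  simp only [rankOnePencil, map_apply, Matrix.add_apply, Matrix.one_apply,
    vecMulVec_apply, Matrix.smul_apply, smul_eq_mul]
  split_ifs <;> simp only [eval_add, eval_one, eval_zero, eval_mul, eval_C, eval_X] <;> ring

theorem natDegree_rankOnePencil_apply_le (a b : ι → R) (i j : ι) :
    (rankOnePencil a b i j).natDegree ≤ 1 := by
  simp only [rankOnePencil, Matrix.add_apply, Matrix.one_apply, vecMulVec_apply]
  refine (natDegree_add_le _ _).trans (max_le ?_ ?_)
  · split_ifs <;> simp
  · rw [mul_right_comm, ← C_mul]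
    exact (natDegree_C_mul_le _ _).trans natDegree_X_le

theorem rankOnePencil_apply_coeff_one (a b : ι → R) (i j : ι) :
    (rankOnePencil a b i j).coeff 1 = vecMulVec a b i j := by
  simp only [rankOnePencil, Matrix.add_apply, Matrix.one_apply, vecMulVec_apply]
  split_ifs <;> simp [coeff_one]

theorem adjugate_rankOnePencil [Fintype ι] {a b : ι → R} (h : b ⬝ᵥ a = 0) :
    (rankOnePencil a b).adjugate = rankOnePencil (-a) b := by
  have hX : (fun j => C (b j)) ⬝ᵥ (fun i => C (a i) * X) = 0 := by
    simp only [dotProduct, ← mul_assoc, ← C_mul, ← Finset.sum_mul, ← map_sum]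
    rw [← dotProduct, h, C_0, zero_mul]
  rw [rankOnePencil, adjugate_one_add_vecMulVec_of_dotProduct_eq_zero hX, sub_eq_add_neg,
    ← neg_vecMulVec, rankOnePencil]
  simp only [Pi.neg_apply, C_neg, neg_mul]
  rfl

end RankOnePencil

noncomputable def peakV (x : ℝ) : Fin 3 → ℝ := ![Real.exp (-x), -2, Real.exp x]

noncomputable def peakW (x : ℝ) : Fin 3 → ℝ := ![Real.exp x, 1, Real.exp (-x)]

theorem peakW_dotProduct_peakV (y x : ℝ) :
    peakW y ⬝ᵥ peakV x = 2 * (Real.cosh (y - x) - 1) := by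
  simp only [peakW, peakV, dotProduct, Fin.sum_univ_three, Real.cosh_eq, Matrix.cons_val_zero,
    Matrix.cons_val_one, Matrix.cons_val_two, Matrix.head_cons, Matrix.tail_cons]
  rw [← Real.exp_add, ← Real.exp_add, ← sub_eq_add_neg, neg_sub, neg_add_eq_sub]
  ring

theorem peakW_dotProduct_peakV_ne_zero {y x : ℝ} (h : y ≠ x) : peakW y ⬝ᵥ peakV x ≠ 0 := by
  rw [peakW_dotProduct_peakV]
  exact mul_ne_zero two_ne_zero (sub_ne_zero.mpr (Real.one_lt_cosh.mpr (sub_ne_zero.mpr h)).ne')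

theorem Speak_eq_one_add_smul_vecMulVec (x m z : ℝ) :
    Speak x m z = 1 + z • vecMulVec (-m • peakV x) (peakW x) := by
  rw [Speak, sub_eq_add_neg, smul_vecMulVec, smul_smul, ← neg_smul, peakV, peakW]
  ring_nf

noncomputable def speakPoly (x m : ℝ) : Matrix (Fin 3) (Fin 3) ℝ[X] :=
  rankOnePencil (-m • peakV x) (peakW x)

noncomputable def sblockPoly (x m : ℕ → ℝ) (n k : ℕ) : Matrix (Fin 3) (Fin 3) ℝ[X] :=
  ((List.range k).map fun i => speakPoly (x (n - i)) (m (n - i))).prod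

theorem speakPoly_map_eval (x m z : ℝ) : (speakPoly x m).map (eval z) = Speak x m z := by
  rw [speakPoly, rankOnePencil_map_eval, Speak_eq_one_add_smul_vecMulVec]

theorem natDegree_speakPoly_apply_le (x m : ℝ) (i j : Fin 3) :
    (speakPoly x m i j).natDegree ≤ 1 :=
  natDegree_rankOnePencil_apply_le _ _ i j

theorem adjugate_speakPoly (x m : ℝ) : (speakPoly x m).adjugate = speakPoly x (-m) := by
  have h : peakW x ⬝ᵥ (-m • peakV x) = 0 := by
    rw [dotProduct_smul, peakW_dotProduct_peakV, sub_self, Real.cosh_zero, sub_self, mul_zero,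
      smul_zero]
  rw [speakPoly, adjugate_rankOnePencil h, speakPoly]
  simp only [neg_smul]

theorem sblockPoly_map_eval (x m : ℕ → ℝ) (n k : ℕ) (z : ℝ) :
    (sblockPoly x m n k).map (eval z) = Sblock x m n k z := by
  change (evalRingHom z).mapMatrix _ = _
  rw [sblockPoly, map_list_prod, Sblock, List.map_map]
  exact congrArg List.prod (List.map_congr_left fun i _ => speakPoly_map_eval _ _ _)

theorem sblockPoly_add (x m : ℕ → ℝ) (n k l : ℕ) :
    sblockPoly x m n (k + l) = sblockPoly x m n k * sblockPoly x m (n - k) l := by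
  simp only [sblockPoly, List.range_add, List.map_append, List.prod_append, List.map_map,
    Function.comp_def, Nat.sub_sub]

theorem natDegree_sblockPoly_apply_le (x m : ℕ → ℝ) (n k : ℕ) (i j : Fin 3) :
    (sblockPoly x m n k i j).natDegree ≤ k := by
  have h := natDegree_list_prod_apply_le
    ((List.range k).map fun i => speakPoly (x (n - i)) (m (n - i))) ?_ i j
  · simpa [sblockPoly] using h
  · simp [natDegree_speakPoly_apply_le]

theorem natDegree_adjugate_sblockPoly_apply_le (x m : ℕ → ℝ) (n k : ℕ) (i j : Fin 3) :
    ((sblockPoly x m n k).adjugate i j).natDegree ≤ k := by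
  rw [sblockPoly, adjugate_list_prod]
  have h := natDegree_list_prod_apply_le
    (((List.range k).map fun i => speakPoly (x (n - i)) (m (n - i))).map adjugate).reverse ?_ i j
  · simpa using h
  · simp [adjugate_speakPoly, natDegree_speakPoly_apply_le]

theorem sblockPoly_zero_zero_coeff_ne_zero {x m : ℕ → ℝ} {n k : ℕ}
    (hm : ∀ i < k, m (n - i) ≠ 0) (hx : ∀ i, i + 1 < k → x (n - i) ≠ x (n - (i + 1))) :
    (sblockPoly x m n k 0 0).coeff k ≠ 0 := by
  cases k with
  | zero => simp [sblockPoly]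
  | succ k =>
    have htop := coeff_list_prod_apply_length
      ((List.range (k + 1)).map fun i => speakPoly (x (n - i)) (m (n - i)))
      (by simp [natDegree_speakPoly_apply_le]) 0 0
    rw [List.length_map, List.length_range, List.map_map] at htop
    have hcoeff : ((fun M : Matrix (Fin 3) (Fin 3) ℝ[X] => M.map (coeff · 1)) ∘
        fun i => speakPoly (x (n - i)) (m (n - i)))
        = fun i => vecMulVec (-m (n - i) • peakV (x (n - i))) (peakW (x (n - i))) := by
      ext i r s
      exact rankOnePencil_apply_coeff_one _ _ r s
    rw [sblockPoly, htop, hcoeff, list_prod_vecMulVec]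
    simp only [Matrix.smul_apply, vecMulVec_apply, smul_eq_mul, Pi.smul_apply, dotProduct_smul]
    have hmn : m n ≠ 0 := hm 0 k.succ_pos
    refine mul_ne_zero (Finset.prod_ne_zero_iff.mpr fun i hi => ?_)
      (mul_ne_zero (mul_ne_zero (neg_ne_zero.mpr hmn) (Real.exp_pos _).ne') (Real.exp_pos _).ne')
    have hik : i + 1 < k + 1 := Nat.succ_lt_succ (Finset.mem_range.mp hi)
    exact mul_ne_zero (neg_ne_zero.mpr (hm _ hik)) (peakW_dotProduct_peakV_ne_zero (hx i hik))

theorem natDegree_sblockPoly_cross_le {x m : ℕ → ℝ} {n k : ℕ} (hkn : k ≤ n) :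
    (sblockPoly x m n n 1 0 * sblockPoly x m n k 0 0
      - sblockPoly x m n n 0 0 * sblockPoly x m n k 1 0).natDegree ≤ n := by
  obtain ⟨l, rfl⟩ := Nat.exists_eq_add_of_le hkn
  rw [sblockPoly_add x m (k + l) k l, mul_apply_mul_sub_eq_adjugate_fin_three]
  refine (natDegree_sub_le _ _).trans (max_le ?_ ?_) <;> refine natDegree_mul_le.trans ?_ <;>
    exact add_le_add (natDegree_adjugate_sblockPoly_apply_le ..) (natDegree_sblockPoly_apply_le ..)

theorem Polynomial.eventuallyEq_eval_div_sub_eval_div {a b c d : ℝ[X]} (ha : a ≠ 0) (hd : d ≠ 0) :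
    (fun z => b.eval z / a.eval z - c.eval z / d.eval z)
      =ᶠ[atTop] fun z => (b * d - a * c).eval z / (a * d).eval z := by
  filter_upwards [a.eventually_atTop_not_isRoot ha, d.eventually_atTop_not_isRoot hd]
    with z hza hzd
  rw [div_sub_div _ _ hza hzd, eval_sub, eval_mul, eval_mul, eval_mul]

theorem Polynomial.isBigO_eval_div_eval_one_div_pow {N D : ℝ[X]} {k : ℕ} (hD : D ≠ 0)
    (h : N.natDegree + k ≤ D.natDegree) :
    (fun z => N.eval z / D.eval z) =O[atTop] fun z => 1 / z ^ k := by
  have hdeg : (N * X ^ k).degree ≤ D.degree := by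
    rw [degree_eq_natDegree hD]
    exact degree_le_of_natDegree_le (natDegree_mul_le.trans (by simpa using h))
  have hbdd := (div_isBoundedUnder_of_isBigO (isBigO_atTop_of_degree_le _ _ hdeg)).isBigO_one ℝ
  refine ((hbdd.mul (isBigO_refl (fun z : ℝ => 1 / z ^ k) atTop)).congr' ?_ ?_)
  · filter_upwards [eventually_gt_atTop 0] with z hz
    rw [eval_mul, eval_pow, eval_X]
    field_simp
  · simp

theorem ABCvec_apply (x m : ℕ → ℝ) (n : ℕ) (z : ℝ) (i : Fin 3) :
    ABCvec x m n z i = Sblock x m n n z i 0 := by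
  change (Sblock x m n n z *ᵥ ![1, 0, 0]) i = _
  simp [mulVec, dotProduct, Fin.sum_univ_three]

theorem weyl_approx_B_general (n : ℕ) (x m : ℕ → ℝ)
    (hm : ∀ i, 1 ≤ i → i ≤ n → 0 < m i)
    (hx : ∀ i, 1 ≤ i → i < n → x i < x (i + 1))
    (k : ℕ) (hkn : k ≤ n) :
    (fun z : ℝ => ABCvec x m n z 1 / ABCvec x m n z 0
        - Sblock x m n k z 1 0 / Sblock x m n k z 0 0)
      =O[Filter.atTop] (fun z : ℝ => 1 / z ^ k) := by
  have hx' : ∀ i, i + 1 < n → x (n - i) ≠ x (n - (i + 1)) := fun i hi => by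
    have h := hx (n - (i + 1)) (by omega) (by omega)
    rw [show n - (i + 1) + 1 = n - i by omega] at h
    exact h.ne'
  have hcoeff : ∀ j ≤ n, (sblockPoly x m n j 0 0).coeff j ≠ 0 := fun j hj =>
    sblockPoly_zero_zero_coeff_ne_zero (fun i hi => (hm _ (by omega) (by omega)).ne')
      (fun i hi => hx' i (by omega))
  have hne : ∀ j ≤ n, sblockPoly x m n j 0 0 ≠ 0 := fun j hj h =>
    hcoeff j hj (by rw [h, coeff_zero])
  have hdeg : ∀ j ≤ n, (sblockPoly x m n j 0 0).natDegree = j := fun j hj =>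
    le_antisymm (natDegree_sblockPoly_apply_le ..) (le_natDegree_of_ne_zero (hcoeff j hj))
  simp only [ABCvec_apply, ← sblockPoly_map_eval, map_apply]
  refine (eventuallyEq_eval_div_sub_eval_div (hne n le_rfl) (hne k hkn)).trans_isBigO
    (isBigO_eval_div_eval_one_div_pow (mul_ne_zero (hne n le_rfl) (hne k hkn)) ?_)
  rw [natDegree_mul (hne n le_rfl) (hne k hkn), hdeg n le_rfl, hdeg k hkn]
  exact Nat.add_le_add_right (natDegree_sblockPoly_cross_le hkn) k

theorem weyl_approx_B (n : ℕ) (hn : 1 ≤ n) (x m : ℕ → ℝ)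
    (hm : ∀ i, 1 ≤ i → i ≤ n → 0 < m i)
    (hx : ∀ i, 1 ≤ i → i < n → x i < x (i + 1))
    (k : ℕ) (hk1 : 1 ≤ k) (hkn : k ≤ n) :
    (fun z : ℝ => ABCvec x m n z 1 / ABCvec x m n z 0
        - Sblock x m n k z 1 0 / Sblock x m n k z 0 0)
      =O[Filter.atTop] (fun z : ℝ => 1 / z ^ k) :=
  weyl_approx_B_general n x m hm hx k hkn
end

section
/- Assume the pure peakon assumption. Then for every 1 ≤ k ≤ n, the function z ↦ C_n(z)/A_n(z) − s_{31}(z)/s_{11}(z) is O(1/z^k) as z → +∞ (big-O with respect to the filter at +∞ on the reals). -/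
/-!
Treat `z` as a polynomial variable. Each `S_j = I - z T_j`, `T_j = m_j v(x_j) w(x_j)ᵀ`, has
`T_j² = 0` since `w(x) ⬝ v(x) = 0`, so its adjugate is its inverse `I + z T_j`; hence the entries
of `S_{[n,k]}` and of its adjugate have degree `≤ k`. The `z^k` coefficient of `S_{[n,k]}` is a
product of rank-one matrices, `∏ (-m_j) ∏ (w(x_{j+1}) ⬝ v(x_j))` times `v(x_n) w(x_{n-k+1})ᵀ`, and
`w(y) ⬝ v(x) = 2 cosh (y - x) - 2 ≠ 0` for `x ≠ y`: so `A_n` and `s₁₁` have exact degrees `n`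
and `k`. As `(A_n, B_n, C_n)ᵀ = S_{[n,k]} (A_{n-k}, B_{n-k}, C_{n-k})ᵀ`, the numerator
`C_n s₁₁ - A_n s₃₁` of the difference combines `2 × 2` minors of `S_{[n,k]}` (degree `≤ k`) with
`B_{n-k}, C_{n-k}` (degree `≤ n - k`), while the denominator `A_n s₁₁` has degree `n + k`.
-/

open Matrix

open Polynomial

def descProd {M : Type*} [Monoid M] (f : ℕ → M) (n k : ℕ) : M :=
  ((List.range k).map fun i => f (n - i)).prod

section descProd

variable {M : Type*} [Monoid M] (f : ℕ → M) (n : ℕ)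

@[simp]
lemma descProd_zero : descProd f n 0 = 1 := rfl

lemma descProd_succ (k : ℕ) : descProd f n (k + 1) = descProd f n k * f (n - k) := by
  simp [descProd, List.range_succ]

lemma descProd_add (k l : ℕ) :
    descProd f n (k + l) = descProd f n k * descProd f (n - k) l := by
  simp only [descProd, List.range_add, List.map_append, List.prod_append, List.map_map,
    Function.comp_def, Nat.sub_add_eq]

lemma map_descProd {N F : Type*} [Monoid N] [FunLike F M N] [MonoidHomClass F M N] (g : F)
    (k : ℕ) : g (descProd f n k) = descProd (fun j => g (f j)) n k := by
  simp [descProd, map_list_prod, Function.comp_def]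

end descProd

lemma descProd_smul_vecMulVec {R ι : Type*} [CommRing R] [Fintype ι] [DecidableEq ι]
    (c : ℕ → R) (a b : ℕ → ι → R) (n k : ℕ) :
    descProd (fun j => c j • vecMulVec (a j) (b j)) n (k + 1) =
      ((∏ i ∈ Finset.range (k + 1), c (n - i)) *
        ∏ i ∈ Finset.range k, b (n - i) ⬝ᵥ a (n - i - 1)) • vecMulVec (a n) (b (n - k)) := by
  induction k with
  | zero => simp [descProd_succ]
  | succ k ih =>
    rw [descProd_succ, ih, smul_mul_smul_comm, vecMulVec_mul_vecMulVec, vecMulVec_smul,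
      smul_smul, Finset.prod_range_succ (fun i => c (n - i)) (k + 1),
      Finset.prod_range_succ (fun i => b (n - i) ⬝ᵥ a (n - i - 1)) k, Nat.sub_sub]
    congr 1
    ring

lemma adjugate_one_sub_vecMulVec {R ι : Type*} [CommRing R] [Fintype ι] [DecidableEq ι]
    (u v : ι → R) (h : v ⬝ᵥ u = 0) : adjugate (1 - vecMulVec u v) = 1 + vecMulVec u v := by
  have hdet : (1 - vecMulVec u v).det = 1 := by
    rw [sub_eq_add_neg, ← neg_vecMulVec, vecMulVec_eq (Fin 1),
      det_one_add_replicateCol_mul_replicateRow, dotProduct_neg, h, neg_zero, add_zero]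
  have hinv : (1 - vecMulVec u v) * (1 + vecMulVec u v) = 1 := by
    rw [sub_mul, mul_add, mul_add, vecMulVec_mul_vecMulVec, h, zero_smul, vecMulVec_zero]
    simp
  calc adjugate (1 - vecMulVec u v)
      = adjugate (1 - vecMulVec u v) * ((1 - vecMulVec u v) * (1 + vecMulVec u v)) := by
        rw [hinv, mul_one]
    _ = 1 + vecMulVec u v := by rw [← mul_assoc, adjugate_mul, hdet, one_smul, one_mul]

lemma natDegree_apply_le_natDegree_matPolyEquiv {R ι : Type*} [CommSemiring R] [Fintype ι]
    [DecidableEq ι] (M : Matrix ι ι R[X]) (i j : ι) :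
    (M i j).natDegree ≤ (matPolyEquiv M).natDegree :=
  natDegree_le_iff_coeff_eq_zero.mpr fun N hN => by
    rw [← matPolyEquiv_coeff_apply, coeff_eq_zero_of_natDegree_lt hN, Matrix.zero_apply]

/-- In `∑ₗ (P₂ₗ P₀₀ - P₀ₗ P₂₀) Qₗ₀` the `l = 0` term vanishes and the other coefficients are
cofactors of `P`. -/
lemma mul_apply_two_zero_mul_sub {R : Type*} [CommRing R] (P Q : Matrix (Fin 3) (Fin 3) R) :
    (P * Q) 2 0 * P 0 0 - (P * Q) 0 0 * P 2 0 =
      adjugate P 1 1 * Q 2 0 - adjugate P 2 1 * Q 1 0 := by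
  simp [adjugate_fin_three, mul_apply, Fin.sum_univ_three]
  ring

lemma isBigO_eval_div_eval_atTop {p q : ℝ[X]} {a k : ℕ} (hp : p.natDegree ≤ a)
    (hq : q.natDegree = a + k) :
    (fun z => eval z p / eval z q) =O[Filter.atTop] fun z : ℝ => 1 / z ^ k := by
  have hpO : (fun z => eval z p) =O[Filter.atTop] fun z : ℝ => z ^ a := by
    simpa using isBigO_atTop_of_degree_le (P := p) (Q := X ^ a)
      (by rw [degree_X_pow]; exact degree_le_of_natDegree_le hp)
  have hqO : (fun z => (eval z q)⁻¹) =O[Filter.atTop] fun z : ℝ => (z ^ (a + k))⁻¹ := by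
    have := (hq ▸ isEquivalent_atTop_lead (P := q)).inv.isBigO
    refine this.trans (((Asymptotics.isBigO_refl _ _).const_mul_left q.leadingCoeff⁻¹).congr_left
      fun z => ?_)
    simp [mul_comm]
  refine (hpO.mul hqO).congr' (Filter.Eventually.of_forall fun z => by simp [div_eq_mul_inv]) ?_
  filter_upwards [Filter.eventually_ne_atTop 0] with z hz
  rw [pow_add, mul_inv, ← mul_assoc, mul_inv_cancel₀ (pow_ne_zero _ hz), one_mul, one_div]

namespace Peakon

noncomputable def v (x : ℝ) : Fin 3 → ℝ := ![Real.exp (-x), -2, Real.exp x]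

noncomputable def w (x : ℝ) : Fin 3 → ℝ := ![Real.exp x, 1, Real.exp (-x)]

lemma w_dotProduct_v (x y : ℝ) : w y ⬝ᵥ v x = 2 * Real.cosh (y - x) - 2 := by
  simp [v, w, dotProduct, Fin.sum_univ_three, Real.cosh_eq, ← Real.exp_add]
  ring_nf

lemma w_dotProduct_v_self (x : ℝ) : w x ⬝ᵥ v x = 0 := by
  simp [w_dotProduct_v]

lemma w_dotProduct_v_ne_zero {x y : ℝ} (h : x ≠ y) : w y ⬝ᵥ v x ≠ 0 := by
  have := Real.one_lt_cosh.mpr (sub_ne_zero.mpr h.symm)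
  rw [w_dotProduct_v]
  linarith

lemma Speak_eq (x m z : ℝ) : Speak x m z = 1 - (z * m) • vecMulVec (v x) (w x) := rfl

noncomputable def poly (x m : ℝ) : Matrix (Fin 3) (Fin 3) ℝ[X] :=
  1 - vecMulVec (fun i => X * C (m * v x i)) fun j => C (w x j)

lemma poly_map_eval (x m z : ℝ) : (poly x m).map (eval z) = Speak x m z := by
  ext i j
  simp [poly, Speak_eq, vecMulVec_apply, Matrix.one_apply, apply_ite]
  ring

lemma matPolyEquiv_poly (x m : ℝ) :
    matPolyEquiv (poly x m) = 1 - C (m • vecMulVec (v x) (w x)) * X := by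
  have entry (i j : Fin 3) :
      poly x m i j = C ((1 : Matrix (Fin 3) (Fin 3) ℝ) i j) - C (m * v x i * w x j) * X := by
    simp only [poly, Matrix.sub_apply, vecMulVec_apply, Matrix.one_apply, apply_ite C, C_1, C_0,
      C_mul]
    ring
  ext N i j
  rw [matPolyEquiv_coeff_apply, entry]
  rcases N with _ | _ | N <;> simp [coeff_C, coeff_one, vecMulVec_apply, mul_assoc]

lemma adjugate_poly (x m : ℝ) : adjugate (poly x m) = poly x (-m) := by
  rw [poly, adjugate_one_sub_vecMulVec, poly, sub_eq_add_neg, ← neg_vecMulVec]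
  · congr 2
    ext i
    simp
  · have hdot :
        (fun j => C (w x j)) ⬝ᵥ (fun i => X * C (m * v x i)) = X * C (m * (w x ⬝ᵥ v x)) := by
      simp only [dotProduct, Finset.mul_sum, C_mul, map_sum]
      exact Finset.sum_congr rfl fun i _ => by ring
    rw [hdot, w_dotProduct_v_self, mul_zero, C_0, mul_zero]

lemma natDegree_matPolyEquiv_poly_le (x m : ℝ) : (matPolyEquiv (poly x m)).natDegree ≤ 1 := by
  rw [matPolyEquiv_poly]
  exact (natDegree_sub_le _ _).trans
    (by simpa using (natDegree_C_mul_le _ _).trans natDegree_X_le)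

lemma coeff_matPolyEquiv_poly_one (x m : ℝ) :
    (matPolyEquiv (poly x m)).coeff 1 = -m • vecMulVec (v x) (w x) := by
  simp [matPolyEquiv_poly, coeff_one, neg_smul]

noncomputable def block (x m : ℕ → ℝ) (n k : ℕ) : Matrix (Fin 3) (Fin 3) ℝ[X] :=
  descProd (fun j => poly (x j) (m j)) n k

variable (x m : ℕ → ℝ)

lemma block_map_eval (n k : ℕ) (z : ℝ) : (block x m n k).map (eval z) = Sblock x m n k z :=
  calc (block x m n k).map (eval z) = (evalRingHom z).mapMatrix (block x m n k) := rfl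
    _ = Sblock x m n k z := by
      simp only [block, map_descProd, RingHom.mapMatrix_apply, coe_evalRingHom, poly_map_eval]
      rfl

lemma Sblock_apply (n k : ℕ) (z : ℝ) (i j : Fin 3) :
    Sblock x m n k z i j = eval z (block x m n k i j) := by
  rw [← block_map_eval]
  rfl

lemma ABCvec_apply (n : ℕ) (z : ℝ) (i : Fin 3) :
    ABCvec x m n z i = eval z (block x m n n i 0) := by
  rw [← Sblock_apply]
  simp [ABCvec, Sblock, mulVec, dotProduct, Fin.sum_univ_three]

lemma block_succ (n k : ℕ) :
    block x m n (k + 1) = block x m n k * poly (x (n - k)) (m (n - k)) :=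
  descProd_succ _ _ _

lemma natDegree_matPolyEquiv_block_le (n k : ℕ) :
    (matPolyEquiv (block x m n k)).natDegree ≤ k := by
  induction k with
  | zero => simp [block]
  | succ k ih =>
    rw [block_succ, map_mul]
    exact natDegree_mul_le.trans (add_le_add ih (natDegree_matPolyEquiv_poly_le _ _))

lemma natDegree_matPolyEquiv_adjugate_block_le (n k : ℕ) :
    (matPolyEquiv (adjugate (block x m n k))).natDegree ≤ k := by
  induction k with
  | zero => simp [block]
  | succ k ih =>
    rw [block_succ, adjugate_mul_distrib, adjugate_poly, map_mul, add_comm]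
    exact natDegree_mul_le.trans (add_le_add (natDegree_matPolyEquiv_poly_le _ _) ih)

lemma coeff_matPolyEquiv_block (n k : ℕ) :
    (matPolyEquiv (block x m n k)).coeff k =
      descProd (fun j => -m j • vecMulVec (v (x j)) (w (x j))) n k := by
  induction k with
  | zero => simp [block]
  | succ k ih =>
    rw [block_succ, map_mul, coeff_mul_add_eq_of_natDegree_le
      (natDegree_matPolyEquiv_block_le x m n k) (natDegree_matPolyEquiv_poly_le _ _),
      coeff_matPolyEquiv_poly_one, ih, descProd_succ]

lemma natDegree_block_zero_zero {n k : ℕ} (hm : ∀ i, 1 ≤ i → i ≤ n → m i ≠ 0)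
    (hx : ∀ i, 1 ≤ i → i < n → x i ≠ x (i + 1)) (hk : 0 < k) (hkn : k ≤ n) :
    (block x m n k 0 0).natDegree = k := by
  obtain ⟨k, rfl⟩ := Nat.exists_eq_add_one_of_ne_zero hk.ne'
  refine le_antisymm ((natDegree_apply_le_natDegree_matPolyEquiv _ 0 0).trans
    (natDegree_matPolyEquiv_block_le x m n _)) (le_natDegree_of_ne_zero ?_)
  rw [← matPolyEquiv_coeff_apply, coeff_matPolyEquiv_block, descProd_smul_vecMulVec,
    Matrix.smul_apply, vecMulVec_apply, smul_eq_mul]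
  have hmass : ∏ i ∈ Finset.range (k + 1), -m (n - i) ≠ 0 :=
    Finset.prod_ne_zero_iff.mpr fun i hi =>
      neg_ne_zero.mpr (hm _ (by have := Finset.mem_range.mp hi; omega) (Nat.sub_le n i))
  have hgap : ∏ i ∈ Finset.range k, w (x (n - i)) ⬝ᵥ v (x (n - i - 1)) ≠ 0 :=
    Finset.prod_ne_zero_iff.mpr fun i hi => by
      simp only [Finset.mem_range] at hi
      have h := hx (n - i - 1) (by omega) (by omega)
      rw [show n - i - 1 + 1 = n - i by omega] at h
      exact w_dotProduct_v_ne_zero h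
  exact mul_ne_zero (mul_ne_zero hmass hgap)
    (mul_ne_zero (Real.exp_ne_zero _) (Real.exp_ne_zero _))

lemma natDegree_block_numerator_le {n k : ℕ} (hkn : k ≤ n) :
    (block x m n n 2 0 * block x m n k 0 0 - block x m n n 0 0 * block x m n k 2 0).natDegree
      ≤ n := by
  have hsplit : block x m n n = block x m n k * block x m (n - k) (n - k) := by
    rw [block, block, block, ← descProd_add, Nat.add_sub_cancel' hkn]
  have hadj (i j : Fin 3) : (adjugate (block x m n k) i j).natDegree ≤ k :=
    (natDegree_apply_le_natDegree_matPolyEquiv _ i j).trans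
      (natDegree_matPolyEquiv_adjugate_block_le x m n k)
  have hrest (i j : Fin 3) : (block x m (n - k) (n - k) i j).natDegree ≤ n - k :=
    (natDegree_apply_le_natDegree_matPolyEquiv _ i j).trans
      (natDegree_matPolyEquiv_block_le x m _ _)
  rw [hsplit, mul_apply_two_zero_mul_sub]
  refine (natDegree_sub_le _ _).trans (max_le ?_ ?_) <;>
    exact natDegree_mul_le.trans
      ((add_le_add (hadj _ _) (hrest _ _)).trans (Nat.add_sub_cancel' hkn).le)

end Peakon

theorem weyl_approx_C_general (n : ℕ) (x m : ℕ → ℝ)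
    (hm : ∀ i, 1 ≤ i → i ≤ n → 0 < m i)
    (hx : ∀ i, 1 ≤ i → i < n → x i < x (i + 1))
    (k : ℕ) (hk1 : 1 ≤ k) (hkn : k ≤ n) :
    (fun z : ℝ => ABCvec x m n z 2 / ABCvec x m n z 0
        - Sblock x m n k z 2 0 / Sblock x m n k z 0 0)
      =O[Filter.atTop] (fun z : ℝ => 1 / z ^ k) := by
  have hm' : ∀ i, 1 ≤ i → i ≤ n → m i ≠ 0 := fun i h1 h2 => (hm i h1 h2).ne'
  have hx' : ∀ i, 1 ≤ i → i < n → x i ≠ x (i + 1) := fun i h1 h2 => (hx i h1 h2).ne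
  have hA := Peakon.natDegree_block_zero_zero x m hm' hx' (hk1.trans hkn) le_rfl
  have hs := Peakon.natDegree_block_zero_zero x m hm' hx' hk1 hkn
  have hA0 := ne_zero_of_natDegree_gt (hA ▸ hk1.trans hkn)
  have hs0 := ne_zero_of_natDegree_gt (hs ▸ hk1)
  refine (isBigO_eval_div_eval_atTop (Peakon.natDegree_block_numerator_le x m hkn)
    (by rw [natDegree_mul hA0 hs0, hA, hs])).congr' ?_ Filter.EventuallyEq.rfl
  filter_upwards [eventually_atTop_not_isRoot _ hA0, eventually_atTop_not_isRoot _ hs0]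
    with z hAz hsz
  rw [Peakon.ABCvec_apply, Peakon.ABCvec_apply, Peakon.Sblock_apply, Peakon.Sblock_apply,
    div_sub_div _ _ hAz hsz]
  simp only [eval_sub, eval_mul]

theorem weyl_approx_C (n : ℕ) (hn : 1 ≤ n) (x m : ℕ → ℝ)
    (hm : ∀ i, 1 ≤ i → i ≤ n → 0 < m i)
    (hx : ∀ i, 1 ≤ i → i < n → x i < x (i + 1))
    (k : ℕ) (hk1 : 1 ≤ k) (hkn : k ≤ n) :
    (fun z : ℝ => ABCvec x m n z 2 / ABCvec x m n z 0
        - Sblock x m n k z 2 0 / Sblock x m n k z 0 0)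
      =O[Filter.atTop] (fun z : ℝ => 1 / z ^ k) :=
  weyl_approx_C_general n x m hm hx k hk1 hkn
end

section
/- Let n ≥ 1, let λ_1,…,λ_n be positive real numbers, and let b_1,…,b_n and c_1,…,c_n be differentiable real-valued functions on ℝ such that for all t and all k: b_k'(t) = b_k(t)/λ_k, c_k'(t) = b_k(t)·∑_{i=1}^n b_i'(t), and c_k(0) = ∑_{i=1}^n λ_k·b_k(0)·b_i(0)/(λ_i+λ_k). Then for all t and all k: b_k(t) = b_k(0)·e^{t/λ_k} and c_k(t) = ∑_{i=1}^n λ_k·b_k(t)·b_i(t)/(λ_i+λ_k). -/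
/-!
The `b_k` solve the scalar linear equations `b_k' = b_k / λ_k`, so they are exponentials. For the
`c_k`, the product rule and `(1/λ_k + 1/λ_i) λ_k / (λ_i + λ_k) = 1/λ_i` show that the candidate
`∑_i λ_k b_k b_i / (λ_i + λ_k)` has the same derivative `b_k ∑_i b_i / λ_i` as `c_k`; both agree
at `t = 0`, hence everywhere.
-/

open Real Finset

theorem eq_mul_exp_of_hasDerivAt_mul {f : ℝ → ℝ} {r : ℝ} (hf : ∀ t, HasDerivAt f (r * f t) t)
    (t : ℝ) : f t = f 0 * exp (r * t) := by
  have hderiv : ∀ s, HasDerivAt (fun s => f s * exp (-(r * s))) 0 s := fun s => by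
    have hexp : HasDerivAt (fun s => exp (-(r * s))) (exp (-(r * s)) * -r) s := by
      simpa using ((hasDerivAt_id s).const_mul r).neg.exp
    exact ((hf s).fun_mul hexp).congr_deriv (by ring)
  have hconst := is_const_of_deriv_eq_zero (fun s => (hderiv s).differentiableAt)
    (fun s => (hderiv s).deriv) t 0
  simp only [mul_zero, neg_zero, exp_zero, mul_one] at hconst
  rw [← hconst, mul_assoc, ← exp_add, neg_add_cancel, exp_zero, mul_one]

theorem hasDerivAt_sum_mul_mul_div_add {ι : Type*} [Fintype ι] {lam : ι → ℝ}
    (hlam : ∀ i, 0 < lam i) {b : ι → ℝ → ℝ} (hb : ∀ i t, HasDerivAt (b i) (b i t / lam i) t)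
    (k : ι) (t : ℝ) :
    HasDerivAt (fun s => ∑ i, lam k * b k s * b i s / (lam i + lam k))
      (b k t * ∑ i, b i t / lam i) t := by
  rw [mul_sum]
  refine HasDerivAt.fun_sum fun i _ => ?_
  refine ((((hb k t).const_mul (lam k)).fun_mul (hb i t)).div_const (lam i + lam k)).congr_deriv ?_
  have := hlam i
  have := hlam k
  field_simp

theorem bc_time_evolution_general (n : ℕ) (lam : Fin n → ℝ)
    (hlam : ∀ k, 0 < lam k)
    (b c : Fin n → ℝ → ℝ)
    (hbdiff : ∀ k, Differentiable ℝ (b k))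
    (hcdiff : ∀ k, Differentiable ℝ (c k))
    (hb' : ∀ t, ∀ k, deriv (b k) t = b k t / lam k)
    (hc' : ∀ t, ∀ k, deriv (c k) t = b k t * ∑ i, deriv (b i) t)
    (hc0 : ∀ k, c k 0 = ∑ i, lam k * b k 0 * b i 0 / (lam i + lam k)) :
    ∀ t : ℝ, ∀ k,
      b k t = b k 0 * Real.exp (t / lam k) ∧
      c k t = ∑ i, lam k * b k t * b i t / (lam i + lam k) := by
  have hb : ∀ k t, HasDerivAt (b k) (b k t / lam k) t := fun k t =>
    hb' t k ▸ (hbdiff k t).hasDerivAt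
  have hcandidate := hasDerivAt_sum_mul_mul_div_add hlam hb
  intro t k
  constructor
  · rw [div_eq_inv_mul]
    exact eq_mul_exp_of_hasDerivAt_mul (fun s => (hb k s).congr_deriv (by ring)) t
  · refine congrFun (eq_of_fderiv_eq (hcdiff k) (fun s => (hcandidate k s).differentiableAt)
      (fun s => ?_) 0 (hc0 k)) t
    rw [(hcandidate k s).hasFDerivAt.fderiv, (hcdiff k s).hasDerivAt.hasFDerivAt.fderiv, hc' s k]
    simp only [hb' s]

theorem bc_time_evolution (n : ℕ) (hn : 1 ≤ n) (lam : Fin n → ℝ)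
    (hlam : ∀ k, 0 < lam k)
    (b c : Fin n → ℝ → ℝ)
    (hbdiff : ∀ k, Differentiable ℝ (b k))
    (hcdiff : ∀ k, Differentiable ℝ (c k))
    (hb' : ∀ t, ∀ k, deriv (b k) t = b k t / lam k)
    (hc' : ∀ t, ∀ k, deriv (c k) t = b k t * ∑ i, deriv (b i) t)
    (hc0 : ∀ k, c k 0 = ∑ i, lam k * b k 0 * b i 0 / (lam i + lam k)) :
    ∀ t : ℝ, ∀ k,
      b k t = b k 0 * Real.exp (t / lam k) ∧
      c k t = ∑ i, lam k * b k t * b i t / (lam i + lam k) :=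
  bc_time_evolution_general n lam hlam b c hbdiff hcdiff hb' hc' hc0
end

section
/- Let 0 < λ_1 < λ_2 and b_1, b_2 > 0, and define x_1 = ln( b_1·b_2·(λ_2−λ_1)^2 / (b_1·λ_1^2 + b_2·λ_2^2 + λ_1·λ_2·(b_1+b_2)) ), m_1 = (λ_1+λ_2)·(b_1·λ_1+b_2·λ_2)^2 / ( λ_1·λ_2·( (b_1·λ_1+b_2·λ_2)^2 + λ_1·λ_2·(b_1+b_2)^2 ) ), x_2 = ln(b_1+b_2), and m_2 = (b_1+b_2)^2·(λ_1+λ_2) / ( (b_1·λ_1+b_2·λ_2)^2 + λ_1·λ_2·(b_1+b_2)^2 ). Then m_1 > 0, m_2 > 0, x_1 < x_2, and the first component A(z) of the vector (A(z),B(z),C(z))^T = S(x_2,m_2;z)·S(x_1,m_1;z)·(1,0,0)^T satisfies A(z) = (1 − z/λ_1)·(1 − z/λ_2) for all real z. -/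
open Matrix

/-! Each `S(x,m;z)` is the identity minus a rank-one map, so applying the two factors to `e₁`
gives `A(z) = 1 − (m₁+m₂) z + m₁ m₂ (1 − e^{x₁−x₂})² z²` for arbitrary data. For the given data
the denominator of `e^{x₁}` factors as `(λ₁+λ₂)(b₁λ₁+b₂λ₂)`, and then
`1 − e^{x₁−x₂} = K / ((b₁+b₂)(λ₁+λ₂)(b₁λ₁+b₂λ₂))` with `K = (b₁λ₁+b₂λ₂)² + λ₁λ₂(b₁+b₂)² > 0`.
This gives `x₁ < x₂`, `m₁ + m₂ = 1/λ₁ + 1/λ₂` and `m₁ m₂ (1 − e^{x₁−x₂})² = 1/(λ₁λ₂)`, which are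
the coefficients of `(1 − z/λ₁)(1 − z/λ₂)`. -/

open Real

theorem Speak_mulVec (x m z : ℝ) (u : Fin 3 → ℝ) :
    Speak x m z *ᵥ u =
      u - (z * m * (![exp x, 1, exp (-x)] ⬝ᵥ u)) • ![exp (-x), -2, exp x] := by
  rw [Speak, sub_mulVec, one_mulVec, smul_mulVec, vecMulVec_mulVec, op_smul_eq_smul, smul_smul]

theorem Speak_mul_Speak_mulVec_zero (x₁ x₂ m₁ m₂ z : ℝ) :
    (Speak x₂ m₂ z * Speak x₁ m₁ z).mulVec ![1, 0, 0] 0 =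
      1 - (m₁ + m₂) * z + m₁ * m₂ * (1 - exp (x₁ - x₂)) ^ 2 * z ^ 2 := by
  rw [← mulVec_mulVec, Speak_mulVec, Speak_mulVec]
  simp only [dotProduct, Fin.sum_univ_three, Pi.sub_apply, Pi.smul_apply, smul_eq_mul,
    cons_val_zero, cons_val_one, cons_val_two, head_cons, tail_cons, exp_sub, exp_neg]
  field_simp
  ring

theorem two_peakon_A (lam₁ lam₂ b₁ b₂ x₁ x₂ m₁ m₂ : ℝ)
    (h₁ : 0 < lam₁) (h₁₂ : lam₁ < lam₂) (hb₁ : 0 < b₁) (hb₂ : 0 < b₂)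
    (hx₁ : x₁ = Real.log (b₁ * b₂ * (lam₂ - lam₁) ^ 2 /
      (b₁ * lam₁ ^ 2 + b₂ * lam₂ ^ 2 + lam₁ * lam₂ * (b₁ + b₂))))
    (hm₁ : m₁ = (lam₁ + lam₂) * (b₁ * lam₁ + b₂ * lam₂) ^ 2 /
      (lam₁ * lam₂ * ((b₁ * lam₁ + b₂ * lam₂) ^ 2 + lam₁ * lam₂ * (b₁ + b₂) ^ 2)))
    (hx₂ : x₂ = Real.log (b₁ + b₂))
    (hm₂ : m₂ = (b₁ + b₂) ^ 2 * (lam₁ + lam₂) /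
      ((b₁ * lam₁ + b₂ * lam₂) ^ 2 + lam₁ * lam₂ * (b₁ + b₂) ^ 2)) :
    0 < m₁ ∧ 0 < m₂ ∧ x₁ < x₂ ∧
    ∀ z : ℝ, (Speak x₂ m₂ z * Speak x₁ m₁ z).mulVec ![1, 0, 0] 0
      = (1 - z / lam₁) * (1 - z / lam₂) := by
  have h₂ : 0 < lam₂ := h₁.trans h₁₂
  have hden : b₁ * lam₁ ^ 2 + b₂ * lam₂ ^ 2 + lam₁ * lam₂ * (b₁ + b₂) =
      (lam₁ + lam₂) * (b₁ * lam₁ + b₂ * lam₂) := by ring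
  have hexp : exp (x₁ - x₂) =
      b₁ * b₂ * (lam₂ - lam₁) ^ 2 / ((b₁ + b₂) * ((lam₁ + lam₂) * (b₁ * lam₁ + b₂ * lam₂))) := by
    have : 0 < (lam₂ - lam₁) ^ 2 := pow_pos (sub_pos.2 h₁₂) 2
    rw [exp_sub, hx₁, hx₂, hden, exp_log (by positivity), exp_log (by positivity)]
    field_simp
  have hgap : 1 - exp (x₁ - x₂) =
      ((b₁ * lam₁ + b₂ * lam₂) ^ 2 + lam₁ * lam₂ * (b₁ + b₂) ^ 2) /
        ((b₁ + b₂) * ((lam₁ + lam₂) * (b₁ * lam₁ + b₂ * lam₂))) := by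
    rw [hexp]
    field_simp
    ring
  refine ⟨by rw [hm₁]; positivity, by rw [hm₂]; positivity, ?_, fun z => ?_⟩
  · have : 0 < 1 - exp (x₁ - x₂) := by rw [hgap]; positivity
    linarith [exp_lt_one_iff.mp (sub_pos.mp this)]
  · rw [Speak_mul_Speak_mulVec_zero, hgap, hm₁, hm₂]
    field_simp
    ring
end

section
/- Let 0 < λ_1 < λ_2 and b_1, b_2 > 0, and define x_1 = ln( b_1·b_2·(λ_2−λ_1)^2 / (b_1·λ_1^2 + b_2·λ_2^2 + λ_1·λ_2·(b_1+b_2)) ), m_1 = (λ_1+λ_2)·(b_1·λ_1+b_2·λ_2)^2 / ( λ_1·λ_2·( (b_1·λ_1+b_2·λ_2)^2 + λ_1·λ_2·(b_1+b_2)^2 ) ), x_2 = ln(b_1+b_2), and m_2 = (b_1+b_2)^2·(λ_1+λ_2) / ( (b_1·λ_1+b_2·λ_2)^2 + λ_1·λ_2·(b_1+b_2)^2 ). Let (A(z),B(z),C(z))^T = S(x_2,m_2;z)·S(x_1,m_1;z)·(1,0,0)^T. Then for every real z with z ≠ 0, z ≠ λ_1, z ≠ λ_2 and A(z) ≠ 0,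 one has −B(z)/(2·z·A(z)) = b_1/(z−λ_1) + b_2/(z−λ_2). -/
set_option maxHeartbeats 4000000
open Matrix
theorem two_peakon_W (lam₁ lam₂ b₁ b₂ x₁ x₂ m₁ m₂ : ℝ)
    (h₁ : 0 < lam₁) (h₁₂ : lam₁ < lam₂) (hb₁ : 0 < b₁) (hb₂ : 0 < b₂)
    (hx₁ : x₁ = Real.log (b₁ * b₂ * (lam₂ - lam₁) ^ 2 /
      (b₁ * lam₁ ^ 2 + b₂ * lam₂ ^ 2 + lam₁ * lam₂ * (b₁ + b₂))))
    (hm₁ : m₁ = (lam₁ + lam₂) * (b₁ * lam₁ + b₂ * lam₂) ^ 2 /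
      (lam₁ * lam₂ * ((b₁ * lam₁ + b₂ * lam₂) ^ 2 + lam₁ * lam₂ * (b₁ + b₂) ^ 2)))
    (hx₂ : x₂ = Real.log (b₁ + b₂))
    (hm₂ : m₂ = (b₁ + b₂) ^ 2 * (lam₁ + lam₂) /
      ((b₁ * lam₁ + b₂ * lam₂) ^ 2 + lam₁ * lam₂ * (b₁ + b₂) ^ 2)) :
    ∀ z : ℝ, z ≠ 0 → z ≠ lam₁ → z ≠ lam₂ →
      (Speak x₂ m₂ z * Speak x₁ m₁ z).mulVec ![1, 0, 0] 0 ≠ 0 →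
      -((Speak x₂ m₂ z * Speak x₁ m₁ z).mulVec ![1, 0, 0] 1) /
          (2 * z * (Speak x₂ m₂ z * Speak x₁ m₁ z).mulVec ![1, 0, 0] 0)
        = b₁ / (z - lam₁) + b₂ / (z - lam₂) := by
  intro z hz hz1 hz2 hA
  have hl2 : 0 < lam₂ := h₁.trans h₁₂
  have hdl : 0 < lam₂ - lam₁ := sub_pos.2 h₁₂
  have hQ1 : 0 < b₁ * lam₁ ^ 2 + b₂ * lam₂ ^ 2 + lam₁ * lam₂ * (b₁ + b₂) := by positivity
  have hD : 0 < (b₁ * lam₁ + b₂ * lam₂) ^ 2 + lam₁ * lam₂ * (b₁ + b₂) ^ 2 := by positivity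
  have hE1 : Real.exp x₁ = b₁ * b₂ * (lam₂ - lam₁) ^ 2 /
      (b₁ * lam₁ ^ 2 + b₂ * lam₂ ^ 2 + lam₁ * lam₂ * (b₁ + b₂)) := by
    rw [hx₁, Real.exp_log (by positivity)]
  have hE2 : Real.exp x₂ = b₁ + b₂ := by
    rw [hx₂, Real.exp_log (by positivity)]
  have hz1' : z - lam₁ ≠ 0 := sub_ne_zero.2 hz1
  have hz2' : z - lam₂ ≠ 0 := sub_ne_zero.2 hz2
  have hP1 : b₁ * b₂ * (lam₂ - lam₁) ^ 2 ≠ 0 := by positivity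
  have hAeq : (Speak x₂ m₂ z * Speak x₁ m₁ z).mulVec ![1, 0, 0] 0
      = (1 - z / lam₁) * (1 - z / lam₂) := by
    simp [Speak, Matrix.mul_apply, Matrix.mulVec, vecMulVec, Fin.sum_univ_three,
      Matrix.one_apply, dotProduct, Real.exp_neg, hE1, hE2, hm₁, hm₂]
    field_simp
    ring
  have hBeq : (Speak x₂ m₂ z * Speak x₁ m₁ z).mulVec ![1, 0, 0] 1
      = 2 * z * (b₁ / lam₁ * (1 - z / lam₂) + b₂ / lam₂ * (1 - z / lam₁)) := by
    simp [Speak, Matrix.mul_apply, Matrix.mulVec, vecMulVec, Fin.sum_univ_three,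
      Matrix.one_apply, dotProduct, Real.exp_neg, hE1, hE2, hm₁, hm₂]
    field_simp
    ring
  rw [hAeq] at hA
  rw [hAeq, hBeq, div_eq_iff (mul_ne_zero (mul_ne_zero two_ne_zero hz) hA)]
  field_simp
  ring
end

section
/- Let 0 < λ_1 < λ_2 and b_1, b_2 > 0, and define x_1 = ln( b_1·b_2·(λ_2−λ_1)^2 / (b_1·λ_1^2 + b_2·λ_2^2 + λ_1·λ_2·(b_1+b_2)) ), m_1 = (λ_1+λ_2)·(b_1·λ_1+b_2·λ_2)^2 / ( λ_1·λ_2·( (b_1·λ_1+b_2·λ_2)^2 + λ_1·λ_2·(b_1+b_2)^2 ) ), x_2 = ln(b_1+b_2), and m_2 = (b_1+b_2)^2·(λ_1+λ_2) / ( (b_1·λ_1+b_2·λ_2)^2 + λ_1·λ_2·(b_1+b_2)^2 ). Let (A(z),B(z),C(z))^T = S(x_2,m_2;z)·S(x_1,m_1;z)·(1,0,0)^T. Then for every real z with z ≠ 0, z ≠ λ_1, z ≠ λ_2 and A(z) ≠ 0, one has C(z)/(2·z·A(z)) = ∑_{k=1}^{2} ∑_{i=1}^{2} λ_k·b_k·b_i/((λ_i+λ_k)(z−λ_k)).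 -/
open Matrix

set_option maxHeartbeats 1600000 in
theorem two_peakon_Z (lam₁ lam₂ b₁ b₂ x₁ x₂ m₁ m₂ : ℝ)
    (h₁ : 0 < lam₁) (h₁₂ : lam₁ < lam₂) (hb₁ : 0 < b₁) (hb₂ : 0 < b₂)
    (hx₁ : x₁ = Real.log (b₁ * b₂ * (lam₂ - lam₁) ^ 2 /
      (b₁ * lam₁ ^ 2 + b₂ * lam₂ ^ 2 + lam₁ * lam₂ * (b₁ + b₂))))
    (hm₁ : m₁ = (lam₁ + lam₂) * (b₁ * lam₁ + b₂ * lam₂) ^ 2 /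
      (lam₁ * lam₂ * ((b₁ * lam₁ + b₂ * lam₂) ^ 2 + lam₁ * lam₂ * (b₁ + b₂) ^ 2)))
    (hx₂ : x₂ = Real.log (b₁ + b₂))
    (hm₂ : m₂ = (b₁ + b₂) ^ 2 * (lam₁ + lam₂) /
      ((b₁ * lam₁ + b₂ * lam₂) ^ 2 + lam₁ * lam₂ * (b₁ + b₂) ^ 2)) :
    ∀ z : ℝ, z ≠ 0 → z ≠ lam₁ → z ≠ lam₂ →
      (Speak x₂ m₂ z * Speak x₁ m₁ z).mulVec ![1, 0, 0] 0 ≠ 0 →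
      (Speak x₂ m₂ z * Speak x₁ m₁ z).mulVec ![1, 0, 0] 2 /
          (2 * z * (Speak x₂ m₂ z * Speak x₁ m₁ z).mulVec ![1, 0, 0] 0)
        = ∑ k : Fin 2, ∑ i : Fin 2,
            ![lam₁, lam₂] k * ![b₁, b₂] k * ![b₁, b₂] i /
              ((![lam₁, lam₂] i + ![lam₁, lam₂] k) * (z - ![lam₁, lam₂] k)) := by
  intro z hz hz1 hz2 hA
  have h₂ : 0 < lam₂ := h₁.trans h₁₂
  have h21 : 0 < lam₂ - lam₁ := by linarith
  have hD : 0 < b₁ * lam₁ ^ 2 + b₂ * lam₂ ^ 2 + lam₁ * lam₂ * (b₁ + b₂) := by positivity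
  have hDfac : b₁ * lam₁ ^ 2 + b₂ * lam₂ ^ 2 + lam₁ * lam₂ * (b₁ + b₂)
      = (lam₁ + lam₂) * (b₁ * lam₁ + b₂ * lam₂) := by ring
  have hE1 : Real.exp x₁ = b₁ * b₂ * (lam₂ - lam₁) ^ 2 /
      ((lam₁ + lam₂) * (b₁ * lam₁ + b₂ * lam₂)) := by
    rw [hx₁, Real.exp_log (by positivity), hDfac]
  have hE2 : Real.exp x₂ = b₁ + b₂ := by
    rw [hx₂, Real.exp_log (by positivity)]
  have hE2' : Real.exp (-x₂) = (b₁ + b₂)⁻¹ := by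
    rw [Real.exp_neg, hE2]
  have hQ : 0 < (b₁ * lam₁ + b₂ * lam₂) ^ 2 + lam₁ * lam₂ * (b₁ + b₂) ^ 2 := by positivity
  have hll : (0:ℝ) < lam₁ + lam₂ := by positivity
  have hp : 0 < b₁ * lam₁ + b₂ * lam₂ := by positivity
  have hb : (0:ℝ) < b₁ + b₂ := by positivity
  have h11 : Real.exp (-x₁) * Real.exp x₁ = 1 := by
    rw [← Real.exp_add]; simp
  have h22 : Real.exp (-x₂) * Real.exp x₂ = 1 := by
    rw [← Real.exp_add]; simp
  have h22' : Real.exp x₂ * Real.exp (-x₂) = 1 := by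
    rw [← Real.exp_add]; simp
  -- the mixed exponential ratio
  have hr : Real.exp x₁ * Real.exp (-x₂)
      = b₁ * b₂ * (lam₂ - lam₁) ^ 2 /
        ((lam₁ + lam₂) * (b₁ * lam₁ + b₂ * lam₂) * (b₁ + b₂)) := by
    rw [hE1, hE2']
    field_simp
  -- symbolic reduction of A
  have hA0 : (Speak x₂ m₂ z * Speak x₁ m₁ z).mulVec ![1, 0, 0] 0
      = (1 - z*m₁)*(1 - z*m₂)
        - z*m₂*(2*z*m₁*(Real.exp x₁ * Real.exp (-x₂))
            - z*m₁*(Real.exp x₁ * Real.exp (-x₂))^2) := by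
    simp only [Speak, Matrix.mul_apply, Matrix.mulVec, dotProduct, Fin.sum_univ_three,
      Matrix.sub_apply, Matrix.smul_apply, vecMulVec_apply, Matrix.one_apply,
      Matrix.cons_val_zero, Matrix.cons_val_one, Matrix.head_cons, Matrix.cons_val_two,
      Matrix.tail_cons, smul_eq_mul,
      show ((0:Fin 3) = 2) ↔ False from by decide,
      show ((2:Fin 3) = 0) ↔ False from by decide,
      show ((2:Fin 3) = 1) ↔ False from by decide,
      show ((0:Fin 3) = 1) ↔ False from by decide,
      show ((1:Fin 3) = 0) ↔ False from by decide,
      show ((1:Fin 3) = 2) ↔ False from by decide, if_false, if_true]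
    rw [h11, h22]
    ring
  -- symbolic reduction of C
  have hC0 : (Speak x₂ m₂ z * Speak x₁ m₁ z).mulVec ![1, 0, 0] 2
      = -z*m₁*(Real.exp x₁)^2*(1 - z*m₂)
        - z*m₂*((Real.exp x₂)^2*(1 - z*m₁) + 2*z*m₁*(Real.exp x₁ * Real.exp x₂)) := by
    simp only [Speak, Matrix.mul_apply, Matrix.mulVec, dotProduct, Fin.sum_univ_three,
      Matrix.sub_apply, Matrix.smul_apply, vecMulVec_apply, Matrix.one_apply,
      Matrix.cons_val_zero, Matrix.cons_val_one, Matrix.head_cons, Matrix.cons_val_two,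
      Matrix.tail_cons, smul_eq_mul,
      show ((0:Fin 3) = 2) ↔ False from by decide,
      show ((2:Fin 3) = 0) ↔ False from by decide,
      show ((2:Fin 3) = 1) ↔ False from by decide,
      show ((0:Fin 3) = 1) ↔ False from by decide,
      show ((1:Fin 3) = 0) ↔ False from by decide,
      show ((1:Fin 3) = 2) ↔ False from by decide, if_false, if_true]
    rw [h11, h22']
    ring
  -- closed form for A
  have hAeq : (Speak x₂ m₂ z * Speak x₁ m₁ z).mulVec ![1, 0, 0] 0
      = (lam₁ - z) * (lam₂ - z) / (lam₁ * lam₂) := by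
    rw [hA0, hr, hm₁, hm₂]
    field_simp
    ring
  -- closed form for C
  have hCeq : (Speak x₂ m₂ z * Speak x₁ m₁ z).mulVec ![1, 0, 0] 2
      = -z * (b₁ ^ 2 / lam₁ + b₂ ^ 2 / lam₂ + 4 * b₁ * b₂ / (lam₁ + lam₂))
        + z ^ 2 * (b₁ + b₂) ^ 2 / (lam₁ * lam₂) := by
    rw [hC0, hE1, hE2, hm₁, hm₂]
    field_simp
    ring
  rw [hAeq] at hA
  rw [hAeq, hCeq]
  have hzl1 : z - lam₁ ≠ 0 := sub_ne_zero.mpr hz1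
  have hzl2 : z - lam₂ ≠ 0 := sub_ne_zero.mpr hz2
  have h12 : (lam₁ - z) * (lam₂ - z) ≠ 0 := by
    rw [div_ne_zero_iff] at hA; exact hA.1
  simp only [Fin.sum_univ_two, Matrix.cons_val_zero, Matrix.cons_val_one, Matrix.head_cons]
  rw [div_eq_iff (by
    refine mul_ne_zero (mul_ne_zero two_ne_zero hz) ?_
    exact div_ne_zero h12 (by positivity))]
  field_simp
  ring
end

section
/- Fix 1 ≤ k ≤ n and suppose Δ_k^{01} ≠ 0. Define p_k(z) = ∑_{a=1}^n b_a·(q_k(z) − q_k(λ_a))/(z − λ_a) for z distinct from all λ_a. Then p_k(0) = (2/Δ_k^{01}) · det N, where N is the (k+1)×(k+1) matrix whose first row is (0, γ_0, γ_1, …, γ_{k−1}) and whose remaining rows are (I_{i,0}, I_{i,1}, …, I_{i,k}) for i = 0, 1, …, k−1. -/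
lemma det_updateRow_finsum {m : ℕ} {ι : Type*} (A : Matrix (Fin m) (Fin m) ℝ)
    (i : Fin m) (s : Finset ι) (f : ι → Fin m → ℝ) :
    (A.updateRow i (∑ a ∈ s, f a)).det = ∑ a ∈ s, (A.updateRow i (f a)).det := by
  classical
  induction s using Finset.cons_induction with
  | empty =>
      simp only [Finset.sum_empty]
      exact Matrix.det_eq_zero_of_row_eq_zero i (by simp)
  | cons a s ha ih =>
      rw [Finset.sum_cons, Matrix.det_updateRow_add, ih, Finset.sum_cons]

theorem pk_at_zero (n : ℕ) (hn : 1 ≤ n) (lam b : Fin n → ℝ)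
    (hlam : ∀ a, 0 < lam a) (hdist : Function.Injective lam)
    (hb : ∀ a, 0 < b a)
    (γ : ℕ → ℝ) (hγ : ∀ j, γ j = ∑ a, b a * lam a ^ j)
    (I : ℕ → ℕ → ℝ)
    (hI : ∀ i j, I i j = ∑ a, ∑ c, lam a ^ (i + 1) * lam c ^ j * b a * b c / (lam a + lam c))
    (k : ℕ) (hk1 : 1 ≤ k) (hkn : k ≤ n)
    (Δ : ℝ)
    (hΔdef : Δ = (Matrix.of fun i j : Fin k => I (i : ℕ) ((j : ℕ) + 1)).det)
    (hΔ : Δ ≠ 0)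
    (Q : ℝ → Matrix (Fin (k + 1)) (Fin (k + 1)) ℝ)
    (hQ : ∀ z (i j : Fin (k + 1)),
      Q z i j = if (i : ℕ) = 0 then z ^ (j : ℕ) else I ((i : ℕ) - 1) (j : ℕ))
    (qk : ℝ → ℝ) (hqk : ∀ z, qk z = (2 / Δ) * (Q z).det)
    (p : ℝ → ℝ)
    (hp : ∀ z : ℝ, (∀ a, z ≠ lam a) →
      p z = ∑ a, b a * (qk z - qk (lam a)) / (z - lam a))
    (N : Matrix (Fin (k + 1)) (Fin (k + 1)) ℝ)
    (hN : ∀ i j : Fin (k + 1),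
      N i j = if (i : ℕ) = 0 then (if (j : ℕ) = 0 then 0 else γ ((j : ℕ) - 1))
        else I ((i : ℕ) - 1) (j : ℕ)) :
    p 0 = (2 / Δ) * N.det := by
  classical
  have hl0 : ∀ a, lam a ≠ 0 := fun a => (hlam a).ne'
  set A : Matrix (Fin (k+1)) (Fin (k+1)) ℝ := Q 0 with hA
  set r : ℝ → Fin (k+1) → ℝ := fun z j => z ^ (j : ℕ) with hr
  have hQz : ∀ z, Q z = A.updateRow 0 (r z) := by
    intro z
    ext i j
    rw [Matrix.updateRow_apply]
    by_cases h : i = 0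
    · subst h; simp [hQ, hr]
    · have h' : (i : ℕ) ≠ 0 := fun hc => h (Fin.ext hc)
      simp [hQ, h, h', hr, hA]
  have hdetQ : ∀ z, (Q z).det = (A.updateRow 0 (r z)).det := fun z => by rw [hQz]
  -- N as updateRow of A with a sum row
  have hNeq : N = A.updateRow 0 (∑ a, (b a / lam a) • (r (lam a) - r 0)) := by
    ext i j
    rw [Matrix.updateRow_apply]
    by_cases h : i = 0
    · subst h
      simp only [hN, Fin.val_zero, if_pos rfl]
      rw [Finset.sum_apply]
      by_cases hj : (j : ℕ) = 0
      · simp [hj, hr]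
      · rw [if_neg hj, hγ]
        have : ∀ a : Fin n, ((b a / lam a) • (r (lam a) - r 0)) j
            = b a * lam a ^ ((j : ℕ) - 1) := by
          intro a
          have hz : (0:ℝ) ^ (j:ℕ) = 0 := zero_pow hj
          have hlj : lam a ^ (j:ℕ) = lam a * lam a ^ ((j:ℕ) - 1) := by
            rw [← pow_succ']
            congr 1
            omega
          simp only [Pi.smul_apply, Pi.sub_apply, hr, smul_eq_mul, hz, sub_zero, hlj]
          rw [← mul_assoc, div_mul_cancel₀ _ (hl0 a)]
        rw [Finset.sum_congr rfl fun a _ => this a]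
        simp
    · have h' : (i : ℕ) ≠ 0 := fun hc => h (Fin.ext hc)
      simp [hN, h, h', hQ, hA]
  -- each term of p 0
  have key : ∀ a : Fin n, b a * (qk 0 - qk (lam a)) / (0 - lam a)
      = (2 / Δ) * (A.updateRow 0 ((b a / lam a) • (r (lam a) - r 0))).det := by
    intro a
    have hsub : (b a / lam a) • (r (lam a) - r 0)
        = (b a / lam a) • r (lam a) + (-(b a / lam a)) • r 0 := by
      ext j; simp; ring
    rw [hsub, Matrix.det_updateRow_add, Matrix.det_updateRow_smul,
      Matrix.det_updateRow_smul, ← hdetQ, ← hdetQ, hqk, hqk]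
    have := hl0 a
    field_simp
    ring
  rw [hp 0 (fun a => (hlam a).ne), Finset.sum_congr rfl fun a _ => key a,
    ← Finset.mul_sum, ← det_updateRow_finsum, ← hNeq]
end
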